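/- Let E be a field, n a positive integer, and α ∈ E an element of multiplicative order exactly n. Let f ∈ E[X] and let p be a positive integer with f ∣ X^p − 1 and gcd(p, n) = 1. Then for all integers 0 ≤ i < j < n, the polynomials f(α^i X) and f(α^j X) (obtained from f by substituting α^i·X, respectively α^j·X, for X) are coprime in E[X]. -/

import Mathlib

/-!
Substituting `γ X` into `f ∣ X ^ p - 1` gives `f(γ X) ∣ γ ^ p X ^ p - 1`, and two such polynomials
`a X ^ p - 1`, `b X ^ p - 1` with `a ≠ b` are coprime. Since `gcd(p, n) = 1`, `α ^ p` again has
order `n`, so `α ^ (i p) ≠ α ^ (j p)` for `i < j < n`.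
-/

open Polynomial

noncomputable def polySubst {E : Type*} [CommRing E]
    (f : Polynomial E) (γ : E) : Polynomial E :=
  f.comp (Polynomial.C γ * Polynomial.X)

section CommRing

variable {R : Type*} [CommRing R]

theorem polySubst_dvd_polySubst {f g : R[X]} (γ : R) (h : f ∣ g) :
    polySubst f γ ∣ polySubst g γ := by
  obtain ⟨c, rfl⟩ := h
  exact ⟨polySubst c γ, mul_comp f c _⟩

theorem polySubst_X_pow_sub_one (γ : R) (p : ℕ) :
    polySubst (X ^ p - 1 : R[X]) γ = C (γ ^ p) * X ^ p - 1 := by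
  simp only [polySubst, sub_comp, pow_comp, one_comp, X_comp, mul_pow, C_pow]

-- `b (a q - 1) - a (b q - 1) = a - b`.
theorem isCoprime_mul_sub_one_of_isUnit_sub {a b : R} (q : R) (h : IsUnit (a - b)) :
    IsCoprime (a * q - 1) (b * q - 1) := by
  obtain ⟨u, hu⟩ := h
  refine ⟨↑u⁻¹ * b, -(↑u⁻¹ * a), ?_⟩
  linear_combination u.inv_mul - (↑u⁻¹ : R) * hu

end CommRing

theorem isCoprime_C_mul_X_pow_sub_one {K : Type*} [Field K] {a b : K} (hab : a ≠ b) (p : ℕ) :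
    IsCoprime (C a * X ^ p - 1) (C b * X ^ p - 1 : K[X]) :=
  isCoprime_mul_sub_one_of_isUnit_sub _ <| by
    rw [← C_sub]
    exact isUnit_C.mpr (sub_ne_zero.mpr hab).isUnit

theorem pow_pow_injOn_Iio_orderOf {M : Type*} [Monoid M] {x : M} {p : ℕ}
    (hp : (orderOf x).Coprime p) :
    (Set.Iio (orderOf x)).InjOn (fun i ↦ (x ^ i) ^ p) := by
  intro i hi j hj hij
  dsimp only at hij
  rw [pow_right_comm x i p, pow_right_comm x j p] at hij
  rw [← hp.orderOf_pow] at hi hj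
  exact pow_injOn_Iio_orderOf hi hj hij

theorem substituted_denominators_coprime_general
    (E : Type*) [Field E]
    (n : ℕ) (α : E) (hα : orderOf α = n)
    (f : Polynomial E)
    (p : ℕ) (hfp : f ∣ Polynomial.X ^ p - 1)
    (hpn : Nat.gcd p n = 1) :
    ∀ i j : ℕ, i < j → j < n →
      IsCoprime (polySubst f (α ^ i)) (polySubst f (α ^ j)) := by
  intro i j hij hjn
  subst hα
  have hne : (α ^ i) ^ p ≠ (α ^ j) ^ p := fun h ↦
    hij.ne (pow_pow_injOn_Iio_orderOf (Nat.coprime_comm.mp hpn) (hij.trans hjn) hjn h)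
  have hdvd (k : ℕ) : polySubst f (α ^ k) ∣ C ((α ^ k) ^ p) * X ^ p - 1 :=
    polySubst_X_pow_sub_one (α ^ k) p ▸ polySubst_dvd_polySubst (α ^ k) hfp
  exact (isCoprime_C_mul_X_pow_sub_one hne p).mono (hdvd i) (hdvd j)

/-- Lemma 2 (Code Length, Period of a Power Series): if `f ∣ X^p − 1` and
`gcd(p, n) = 1`, then the substituted polynomials `f(α^i X)` for distinct
`i < n` are pairwise coprime. -/
theorem substituted_denominators_coprime
    (E : Type*) [Field E]
    (n : ℕ) (hn : 0 < n) (α : E) (hα : orderOf α = n)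
    (f : Polynomial E)
    (p : ℕ) (hp : 0 < p) (hfp : f ∣ Polynomial.X ^ p - 1)
    (hpn : Nat.gcd p n = 1) :
    ∀ i j : ℕ, i < j → j < n →
      IsCoprime (polySubst f (α ^ i)) (polySubst f (α ^ j)) :=
  substituted_denominators_coprime_general E n α hα f p hfp hpn
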